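/- Let p > 0 and α > 0 be real numbers, let V be a symmetric positive definite n×n real matrix with V ⪯ α·I, and let U be a symmetric n×n real matrix. Then the generalized self-concordance inequality of order ν = 3 holds along the line V + tU: p(p+1)(p+2)·|Tr(V^{−p}·U·V^{−1}·U·V^{−1}·U·V^{−1})| ≤ M · (p(p+1)·Tr(V^{−p}·U·V^{−1}·U·V^{−1}))^{3/2}, where M = (p+2)·(α^{2p}·n)^{1/4} / √(p(p+1)). (The left-hand side is |h'''(0)| and the quantity inside the power on the right is h''(0) for h(t) = Tr((V+tU)^{−p}).) -/

import Mathlib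

open Matrix

/-- Largest eigenvalue of a (Hermitian) real matrix. -/
noncomputable def eigMax {n : ℕ} (M : Matrix (Fin n) (Fin n) ℝ) : ℝ :=
  if h : M.IsHermitian then ⨆ i, h.eigenvalues i else 0

/-- Smallest eigenvalue of a (Hermitian) real matrix. -/
noncomputable def eigMin {n : ℕ} (M : Matrix (Fin n) (Fin n) ℝ) : ℝ :=
  if h : M.IsHermitian then ⨅ i, h.eigenvalues i else 0

/-- Spectral norm (largest singular value) of a real matrix. -/
noncomputable def specNorm {m n : ℕ} (A : Matrix (Fin m) (Fin n) ℝ) : ℝ :=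
  Real.sqrt (eigMax (Aᵀ * A))

/-- Real power of a symmetric matrix, via the spectral decomposition:
`M ^ r` has the same eigenvectors as `M` and eigenvalues `λᵢ ^ r`. -/
noncomputable def mpow {n : ℕ} (M : Matrix (Fin n) (Fin n) ℝ) (r : ℝ) :
    Matrix (Fin n) (Fin n) ℝ :=
  if h : M.IsHermitian then
    (h.eigenvectorUnitary : Matrix (Fin n) (Fin n) ℝ) *
      Matrix.diagonal (fun i => h.eigenvalues i ^ r) *
      (star h.eigenvectorUnitary : Matrix (Fin n) (Fin n) ℝ)
  else 0

/-- Frobenius norm of a real matrix. -/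
noncomputable def frobNorm {m n : ℕ} (M : Matrix (Fin m) (Fin n) ℝ) : ℝ :=
  Real.sqrt ((Mᵀ * M).trace)

/-!
Put `A = V^{-1/2} U V^{-1/2}` and `X = V^{-p/2} A`. Since powers of `V` commute, cyclicity of the
trace gives `Tr(V^{-p} U V^{-1} U V^{-1}) = Tr(X Xᵀ)` and
`Tr(V^{-p} U V^{-1} U V^{-1} U V^{-1}) = Tr(X A Xᵀ)`. Every eigenvalue of `A` is bounded in absolute
value by `‖A‖_F = √Tr(A²)`, so `-‖A‖_F ≤ A ≤ ‖A‖_F` in the Loewner order and, after conjugating by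
`X`, `|Tr(X A Xᵀ)| ≤ ‖A‖_F Tr(X Xᵀ)`. Finally `V^{-p} ⪰ α^{-p}` gives `‖A‖_F² ≤ α^p Tr(X Xᵀ)`, and
`α^{p/2} ≤ (α^{2p} n)^{1/4}` as soon as `n ≥ 1`.
-/

open scoped MatrixOrder

namespace Matrix

section Trace

variable {m : Type*} [Fintype m]

lemma trace_mono {A B : Matrix m m ℝ} (h : A ≤ B) : A.trace ≤ B.trace := by
  simpa [trace_sub] using (le_iff.mp h).trace_nonneg

lemma trace_mul_self_mul_mul_self_of_commute {S P : Matrix m m ℝ} (h : Commute S P)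
    (M : Matrix m m ℝ) : (P * P * M * (S * S)).trace = (P * (S * M * S) * P).trace := by
  rw [← mul_assoc, trace_mul_comm, ← mul_assoc, ← mul_assoc, (h.mul_right h).eq]
  simp only [mul_assoc]
  rw [trace_mul_comm]
  simp only [mul_assoc]

variable [DecidableEq m]

lemma IsHermitian.trace_cfc {A : Matrix m m ℝ} (hA : A.IsHermitian) (f : ℝ → ℝ) :
    (cfc f A).trace = ∑ i, f (hA.eigenvalues i) := by
  rw [hA.cfc_eq, IsHermitian.cfc, Unitary.conjStarAlgAut_apply, trace_mul_cycle,
    Unitary.coe_star_mul_self, one_mul, trace_diagonal]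
  rfl

lemma IsHermitian.sq_le_trace_mul_self {A : Matrix m m ℝ} (hA : A.IsHermitian) {x : ℝ}
    (hx : x ∈ spectrum ℝ A) : x ^ 2 ≤ (A * A).trace := by
  rw [hA.spectrum_real_eq_range_eigenvalues] at hx
  obtain ⟨i, rfl⟩ := hx
  rw [← sq, ← cfc_pow_id (R := ℝ) A 2 hA.isSelfAdjoint, hA.trace_cfc]
  exact Finset.single_le_sum (f := fun j => hA.eigenvalues j ^ 2) (fun j _ => sq_nonneg _)
    (Finset.mem_univ i)

lemma mul_conj_algebraMap (X : Matrix m m ℝ) (r : ℝ) :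
    X * algebraMap ℝ _ r * Xᴴ = r • (X * Xᴴ) := by
  rw [Algebra.algebraMap_eq_smul_one, mul_smul_comm, mul_one, smul_mul_assoc]

lemma mul_trace_le_trace_conj {Q : Matrix m m ℝ} {c : ℝ} (hQ : algebraMap ℝ _ c ≤ Q)
    (X : Matrix m m ℝ) : c * (X * Xᴴ).trace ≤ (X * Q * Xᴴ).trace := by
  have h := trace_mono (star_right_conjugate_le_conjugate hQ X)
  rwa [star_eq_conjTranspose, mul_conj_algebraMap, trace_smul, smul_eq_mul] at h

lemma IsHermitian.abs_trace_conj_le {A : Matrix m m ℝ} (hA : A.IsHermitian) {c : ℝ}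
    (hc : ∀ x ∈ spectrum ℝ A, |x| ≤ c) (X : Matrix m m ℝ) :
    |(X * A * Xᴴ).trace| ≤ c * (X * Xᴴ).trace := by
  have hle : A ≤ algebraMap ℝ _ c := (le_algebraMap_iff_spectrum_le hA.isSelfAdjoint).mpr
    fun x hx => (le_abs_self x).trans (hc x hx)
  have hge : algebraMap ℝ _ (-c) ≤ A := (algebraMap_le_iff_le_spectrum hA.isSelfAdjoint).mpr
    fun x hx => neg_le_of_abs_le (hc x hx)
  have hupper := trace_mono (star_right_conjugate_le_conjugate hle X)
  rw [star_eq_conjTranspose, mul_conj_algebraMap, trace_smul, smul_eq_mul] at hupper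
  have hlower := mul_trace_le_trace_conj hge X
  exact abs_le.mpr ⟨by linarith, hupper⟩

end Trace

section Congruence

variable {m : Type*} [Fintype m] {S P U : Matrix m m ℝ}

lemma trace_sq_eq_trace_mul_conjTranspose (hS : S.IsHermitian) (hP : P.IsHermitian)
    (hU : U.IsHermitian) (hSP : Commute S P) :
    (P * P * U * (S * S) * U * (S * S)).trace =
      (P * (S * U * S) * (P * (S * U * S))ᴴ).trace := by
  rw [show P * P * U * (S * S) * U * (S * S) = P * P * (U * (S * S) * U) * (S * S) by
    simp only [mul_assoc], trace_mul_self_mul_mul_self_of_commute hSP]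
  simp only [conjTranspose_mul, hS.eq, hU.eq, hP.eq, mul_assoc]

lemma trace_cube_eq_trace_conj (hS : S.IsHermitian) (hP : P.IsHermitian)
    (hU : U.IsHermitian) (hSP : Commute S P) :
    (P * P * U * (S * S) * U * (S * S) * U * (S * S)).trace =
      (P * (S * U * S) * (S * U * S) * (P * (S * U * S))ᴴ).trace := by
  rw [show P * P * U * (S * S) * U * (S * S) * U * (S * S) =
      P * P * (U * (S * S) * U * (S * S) * U) * (S * S) by
    simp only [mul_assoc], trace_mul_self_mul_mul_self_of_commute hSP]
  simp only [conjTranspose_mul, hS.eq, hU.eq, hP.eq, mul_assoc]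

lemma trace_sq_nonneg (hS : S.IsHermitian) (hP : P.IsHermitian) (hU : U.IsHermitian)
    (hSP : Commute S P) : 0 ≤ (P * P * U * (S * S) * U * (S * S)).trace := by
  rw [trace_sq_eq_trace_mul_conjTranspose hS hP hU hSP]
  exact (posSemidef_self_mul_conjTranspose _).trace_nonneg

lemma abs_trace_cube_le [DecidableEq m] (hS : S.IsHermitian) (hP : P.IsHermitian)
    (hU : U.IsHermitian) (hSP : Commute S P) {c : ℝ} (hc : 0 < c)
    (hPc : algebraMap ℝ _ c⁻¹ ≤ P * P) :
    |(P * P * U * (S * S) * U * (S * S) * U * (S * S)).trace| ≤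
      √(c * (P * P * U * (S * S) * U * (S * S)).trace) *
        (P * P * U * (S * S) * U * (S * S)).trace := by
  rw [trace_cube_eq_trace_conj hS hP hU hSP, trace_sq_eq_trace_mul_conjTranspose hS hP hU hSP]
  set A := S * U * S
  set X := P * A
  have hT₂ : 0 ≤ (X * Xᴴ).trace := (posSemidef_self_mul_conjTranspose X).trace_nonneg
  have hA : A.IsHermitian := by
    simp only [A, IsHermitian, conjTranspose_mul, hS.eq, hU.eq, mul_assoc]
  have hAA : (A * A).trace ≤ c * (X * Xᴴ).trace := by
    have hXX : X * Xᴴ = (P * A) * (A * P) := by rw [conjTranspose_mul, hA.eq, hP.eq]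
    have h := mul_trace_le_trace_conj hPc A
    rw [hA.eq, show A * (P * P) * A = (A * P) * (P * A) by simp only [mul_assoc],
      trace_mul_comm (A * P), ← hXX] at h
    rwa [inv_mul_le_iff₀ hc] at h
  calc |(X * A * Xᴴ).trace|
      ≤ √(A * A).trace * (X * Xᴴ).trace :=
        hA.abs_trace_conj_le (fun x hx => Real.abs_le_sqrt (hA.sq_le_trace_mul_self hx)) X
    _ ≤ √(c * (X * Xᴴ).trace) * (X * Xᴴ).trace := by gcongr

end Congruence

section Power

variable {n : ℕ}

lemma mpow_eq_cfc {M : Matrix (Fin n) (Fin n) ℝ} (hM : M.IsHermitian) (r : ℝ) :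
    mpow M r = cfc (fun x : ℝ => x ^ r) M := by
  rw [hM.cfc_eq, mpow, dif_pos hM, IsHermitian.cfc, Unitary.conjStarAlgAut_apply]
  rfl

namespace PosDef

variable {V : Matrix (Fin n) (Fin n) ℝ}

lemma pos_of_mem_spectrum (hV : V.PosDef) {x : ℝ} (hx : x ∈ spectrum ℝ V) : 0 < x :=
  (isStrictlyPositive_iff_posDef.mpr hV).spectrum_pos hx

lemma mpow_add (hV : V.PosDef) (r s : ℝ) : mpow V (r + s) = mpow V r * mpow V s := by
  simp only [mpow_eq_cfc hV.1]
  rw [← cfc_mul _ _ V (V.finite_real_spectrum.continuousOn _)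
    (V.finite_real_spectrum.continuousOn _)]
  exact cfc_congr fun x hx => Real.rpow_add (hV.pos_of_mem_spectrum hx) r s

lemma commute_mpow (hV : V.PosDef) (r s : ℝ) : Commute (mpow V r) (mpow V s) := by
  rw [Commute, SemiconjBy, ← hV.mpow_add, ← hV.mpow_add, add_comm]

lemma isHermitian_mpow (hV : V.PosDef) (r : ℝ) : (mpow V r).IsHermitian := by
  rw [mpow_eq_cfc hV.1]
  exact cfc_predicate _ V

lemma algebraMap_rpow_le_mpow (hV : V.PosDef) {α r : ℝ} (hVα : V ≤ algebraMap ℝ _ α)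
    (hr : r ≤ 0) : algebraMap ℝ _ (α ^ r) ≤ mpow V r := by
  rw [mpow_eq_cfc hV.1]
  refine algebraMap_le_cfc _ _ V (fun x hx => ?_) (V.finite_real_spectrum.continuousOn _)
    hV.1.isSelfAdjoint
  exact Real.rpow_le_rpow_of_nonpos (hV.pos_of_mem_spectrum hx)
    ((le_algebraMap_iff_spectrum_le hV.1.isSelfAdjoint).mp hVα x hx) hr

end PosDef

end Power

end Matrix

lemma Real.rpow_three_halves {x : ℝ} (hx : 0 ≤ x) : x ^ ((3 : ℝ) / 2) = x * √x := by
  rw [show (3 : ℝ) / 2 = 1 + 1 / 2 by norm_num, Real.rpow_add' hx (by norm_num), Real.rpow_one,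
    Real.sqrt_eq_rpow]

lemma gsc_bound_of_abs_le_sqrt_mul {p α T₂ T₃ : ℝ} {n : ℕ} (hp : 0 < p) (hα : 0 < α)
    (hn : 0 < n) (hT₂ : 0 ≤ T₂) (hT₃ : |T₃| ≤ √(α ^ p * T₂) * T₂) :
    p * (p + 1) * (p + 2) * |T₃| ≤
      (p + 2) * (α ^ (2 * p) * (n : ℝ)) ^ ((1 : ℝ) / 4) / √(p * (p + 1)) *
        (p * (p + 1) * T₂) ^ ((3 : ℝ) / 2) := by
  set q := p * (p + 1)
  set K := (α ^ (2 * p) * (n : ℝ)) ^ ((1 : ℝ) / 4)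
  have hq : 0 < q := by positivity
  have hK : √(α ^ p) ≤ K :=
    calc √(α ^ p) = (α ^ (2 * p)) ^ ((1 : ℝ) / 4) := by
          rw [Real.sqrt_eq_rpow, ← Real.rpow_mul hα.le, ← Real.rpow_mul hα.le]
          ring_nf
      _ ≤ K := Real.rpow_le_rpow (by positivity)
          (le_mul_of_one_le_right (by positivity) (by exact_mod_cast hn)) (by norm_num)
  have hrhs : (p + 2) * K / √q * (q * T₂) ^ ((3 : ℝ) / 2) = (p + 2) * q * (K * √T₂ * T₂) := by
    rw [Real.rpow_three_halves (by positivity), Real.sqrt_mul hq.le]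
    field_simp
  rw [Real.sqrt_mul (by positivity)] at hT₃
  calc q * (p + 2) * |T₃| = (p + 2) * q * |T₃| := by ring
    _ ≤ (p + 2) * q * (√(α ^ p) * √T₂ * T₂) := by gcongr
    _ ≤ (p + 2) * q * (K * √T₂ * T₂) := by gcongr
    _ = _ := hrhs.symm

theorem trace_power_gsc (n : ℕ) (p α : ℝ) (hp : 0 < p) (hα : 0 < α)
    (V U : Matrix (Fin n) (Fin n) ℝ) (hV : V.PosDef)
    (hVα : (α • (1 : Matrix (Fin n) (Fin n) ℝ) - V).PosSemidef)
    (hU : U.IsHermitian) :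
    p * (p + 1) * (p + 2) *
        |(mpow V (-p) * U * mpow V (-1) * U * mpow V (-1) * U * mpow V (-1)).trace| ≤
      (p + 2) * (α ^ (2 * p) * (n : ℝ)) ^ ((1 : ℝ) / 4) / Real.sqrt (p * (p + 1)) *
        (p * (p + 1) * (mpow V (-p) * U * mpow V (-1) * U * mpow V (-1)).trace) ^
          ((3 : ℝ) / 2) := by
  rcases Nat.eq_zero_or_pos n with rfl | hn
  · simp [trace]
  set S := mpow V (-(1 / 2))
  set P := mpow V (-(p / 2))
  have hSS : mpow V (-1) = S * S := by rw [← hV.mpow_add]; norm_num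
  have hPP : mpow V (-p) = P * P := by rw [← hV.mpow_add]; ring_nf
  have hPα : algebraMap ℝ _ (α ^ p)⁻¹ ≤ P * P := by
    rw [← Real.rpow_neg hα.le, ← hPP]
    exact hV.algebraMap_rpow_le_mpow (by rwa [le_iff, Algebra.algebraMap_eq_smul_one])
      (by linarith)
  have hS := hV.isHermitian_mpow (-(1 / 2))
  have hP := hV.isHermitian_mpow (-(p / 2))
  have hSP := hV.commute_mpow (-(1 / 2)) (-(p / 2))
  rw [hSS, hPP]
  exact gsc_bound_of_abs_le_sqrt_mul hp hα hn (trace_sq_nonneg hS hP hU hSP)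
    (abs_trace_cube_le hS hP hU hSP (by positivity) hPα)
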